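/- arXiv:1912.08598 — 5 statements merged into one kernel-verified Lean document; each statement's English description precedes it below -/
import Mathlib

section
/- If n ≥ B^d where B ≥ 2 and d ≥ 1 are coprime integers, then some base-B subword of n is divisible by d. That is, writing n = Σ_{k=0}^{m} x_k B^k with x_m ≠ 0 and defining W(i,j) = Σ_{k=i}^{j} x_k B^{k-i}, there exist 0 ≤ i ≤ j ≤ m with d ∣ W(i,j). -/
/-!
Among the `d + 1` digit prefix sums `∑_{k<j} x_k B^k`, `0 ≤ j ≤ d`, two (say `j = a < b`) agree
modulo `d` by pigeonhole. Their difference is `B^a · W(a, b-1)`, and `B^a` is a unit modulo `d`. Since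
`n ≥ B^d`, `n` has more than `d` digits, so `b - 1 < d` is a valid digit position.
-/

/-- The base-`B` subword of `n` from digit position `i` to `j`. -/
def subword (B n i j : ℕ) : ℕ :=
  ∑ k ∈ Finset.Icc i j, (Nat.digits B n).getD k 0 * B ^ (k - i)

open Finset

theorem Nat.exists_lt_le_modEq {d : ℕ} (hd : d ≠ 0) (P : ℕ → ℕ) :
    ∃ a b, a < b ∧ b ≤ d ∧ P a ≡ P b [MOD d] := by
  have hmaps : ∀ j ∈ range (d + 1), P j % d ∈ range d := fun j _ =>
    mem_range.mpr (Nat.mod_lt _ (Nat.pos_of_ne_zero hd))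
  obtain ⟨a, ha, b, hb, hab, hmod⟩ :=
    exists_ne_map_eq_of_card_lt_of_maps_to (by simp) hmaps
  rw [mem_range, Nat.lt_succ_iff] at ha hb
  rcases hab.lt_or_gt with hlt | hlt
  · exact ⟨a, b, hlt, hb, hmod⟩
  · exact ⟨b, a, hlt, ha, hmod.symm⟩

theorem sum_Ico_mul_pow_eq_pow_mul (B : ℕ) (f : ℕ → ℕ) {a b : ℕ} :
    ∑ k ∈ Ico a b, f k * B ^ k = B ^ a * ∑ k ∈ Ico a b, f k * B ^ (k - a) := by
  rw [mul_sum]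
  refine sum_congr rfl fun k hk => ?_
  rw [mul_left_comm, ← pow_add, Nat.add_sub_cancel' (mem_Ico.mp hk).1]

theorem dvd_sum_Ico_mul_pow_of_modEq {B d : ℕ} (hcop : Nat.Coprime B d) (f : ℕ → ℕ) {a b : ℕ}
    (hab : a ≤ b)
    (hmod : ∑ k ∈ range a, f k * B ^ k ≡ ∑ k ∈ range b, f k * B ^ k [MOD d]) :
    d ∣ ∑ k ∈ Ico a b, f k * B ^ (k - a) := by
  rw [← sum_range_add_sum_Ico _ hab, sum_Ico_mul_pow_eq_pow_mul] at hmod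
  have htail : d ∣ B ^ a * ∑ k ∈ Ico a b, f k * B ^ (k - a) :=
    Nat.modEq_zero_iff_dvd.mp (Nat.ModEq.add_left_cancel' (∑ k ∈ range a, f k * B ^ k)
      (by simpa using hmod)).symm
  exact (hcop.pow_left a).symm.dvd_of_dvd_mul_left htail

theorem subword_divisible_general (B d n : ℕ) (hB : 2 ≤ B)
    (hcop : Nat.Coprime B d) (hn : B ^ d ≤ n) :
    ∃ i j : ℕ, i ≤ j ∧ j < (Nat.digits B n).length ∧ d ∣ subword B n i j := by
  have hd : d ≠ 0 := by
    rintro rfl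
    have := (Nat.coprime_zero_right B).mp hcop
    omega
  obtain ⟨a, b, hab, hbd, hmod⟩ := Nat.exists_lt_le_modEq hd
    fun j => ∑ k ∈ range j, (Nat.digits B n).getD k 0 * B ^ k
  obtain ⟨c, rfl⟩ := Nat.exists_eq_add_of_lt hab
  refine ⟨a, a + c, by omega, ?_, ?_⟩
  · exact lt_of_lt_of_le (by omega) ((Nat.lt_digits_length_iff hB n).mpr hn)
  · have := dvd_sum_Ico_mul_pow_of_modEq hcop _ hab.le hmod
    rwa [Ico_add_one_right_eq_Icc] at this

theorem subword_divisible (B d n : ℕ) (hB : 2 ≤ B) (hd : 1 ≤ d)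
    (hcop : Nat.Coprime B d) (hn : B ^ d ≤ n) :
    ∃ i j : ℕ, i ≤ j ∧ j < (Nat.digits B n).length ∧ d ∣ subword B n i j :=
  subword_divisible_general B d n hB hcop hn
end

section
/- If n is an integer all of whose base-B subwords are prime (B ≥ 2), then n < B^(2p), where p is the smallest prime not dividing B. -/
lemma subword_split (B n a j k : ℕ) (h1 : a ≤ j) (h2 : j < k) :
    subword B n a k = subword B n a j + B ^ (j + 1 - a) * subword B n (j + 1) k := by
  unfold subword
  have hsplit : Finset.Icc a k = Finset.Icc a j ∪ Finset.Icc (j + 1) k := by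
    ext t; simp only [Finset.mem_Icc, Finset.mem_union]; omega
  have hdisj : Disjoint (Finset.Icc a j) (Finset.Icc (j + 1) k) := by
    simp only [Finset.disjoint_left, Finset.mem_Icc]; omega
  rw [hsplit, Finset.sum_union hdisj, Finset.mul_sum]
  congr 1
  refine Finset.sum_congr rfl fun t ht => ?_
  simp only [Finset.mem_Icc] at ht
  rw [← mul_assoc, mul_comm (B ^ (j + 1 - a)), mul_assoc, ← pow_add]
  congr 2
  omega

theorem substrime_bound (B n : ℕ) (hB : 2 ≤ B)
    (hprime : ∀ i j : ℕ, i ≤ j → j < (Nat.digits B n).length →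
      (subword B n i j).Prime) :
    n < B ^ (2 * sInf {p : ℕ | p.Prime ∧ ¬ p ∣ B}) := by
  set L := (Nat.digits B n).length with hL
  -- the set of primes not dividing B is nonempty
  obtain ⟨q, hqB, hq⟩ := Nat.exists_infinite_primes (B + 1)
  have hne : {p : ℕ | p.Prime ∧ ¬ p ∣ B} ≠ ∅ := by
    refine Set.nonempty_iff_ne_empty.mp ⟨q, hq, fun hdvd => ?_⟩
    have := Nat.le_of_dvd (by omega) hdvd
    omega
  obtain ⟨hp, hpB⟩ : (sInf {p : ℕ | p.Prime ∧ ¬ p ∣ B}).Prime ∧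
      ¬ sInf {p : ℕ | p.Prime ∧ ¬ p ∣ B} ∣ B :=
    Nat.sInf_mem (Set.nonempty_iff_ne_empty.mpr hne)
  set p := sInf {p : ℕ | p.Prime ∧ ¬ p ∣ B} with hpdef
  -- it suffices to bound the number of digits
  have hlen : L ≤ 2 * p := by
    by_contra hcon
    push_neg at hcon
    -- pigeonhole on residues mod p of the prefixes S j = subword B n 0 j
    have hmaps : ∀ a ∈ Finset.range (2 * p + 1),
        subword B n 0 a % p ∈ Finset.range p := by
      intro a _
      exact Finset.mem_range.mpr (Nat.mod_lt _ hp.pos)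
    have hcard : (Finset.range p).card * 2 < (Finset.range (2 * p + 1)).card := by
      simp; omega
    obtain ⟨r, _, hr⟩ :=
      Finset.exists_lt_card_fiber_of_mul_lt_card_of_maps_to hmaps hcard
    obtain ⟨a, ha, b, hb, c, hc, hab, hac, hbc⟩ := Finset.two_lt_card.mp hr
    simp only [Finset.mem_filter, Finset.mem_range] at ha hb hc
    -- key: no three indices i < j < k with equal prefix residues
    have key : ∀ i j k : ℕ, i < j → j < k → k < L →
        subword B n 0 i % p = subword B n 0 j % p →
        subword B n 0 i % p = subword B n 0 k % p → False := by
      intro i j k hij hjk hkL hfj hfk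
      have hW : ∀ m : ℕ, i < m → m < L →
          subword B n 0 i % p = subword B n 0 m % p → subword B n (i + 1) m = p := by
        intro m him hmL hfm
        have hWm : (subword B n (i + 1) m).Prime := hprime _ _ him hmL
        have hsplit := subword_split B n 0 i m (by omega) him
        simp only [Nat.sub_zero] at hsplit
        have hdvd : p ∣ B ^ (i + 1) * subword B n (i + 1) m := by
          have hle : subword B n 0 i ≤ subword B n 0 m := by omega
          have := (Nat.modEq_iff_dvd' hle).mp hfm
          have heq : subword B n 0 m - subword B n 0 i
              = B ^ (i + 1) * subword B n (i + 1) m := by omega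
          rwa [heq] at this
        have hdvdW : p ∣ subword B n (i + 1) m := by
          rcases (Nat.Prime.dvd_mul hp).mp hdvd with h | h
          · exact absurd (hp.dvd_of_dvd_pow h) hpB
          · exact h
        exact ((Nat.prime_dvd_prime_iff_eq hp hWm).mp hdvdW).symm
      have hWj := hW j hij (by omega) hfj
      have hWk := hW k (by omega) hkL hfk
      -- but subword (i+1) j < subword (i+1) k
      have hsplit2 := subword_split B n (i + 1) j k (by omega) hjk
      have hpos : 0 < subword B n (j + 1) k := (hprime _ _ (by omega) hkL).pos
      have hpow : 0 < B ^ (j + 1 - (i + 1)) := pow_pos (by omega) _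
      nlinarith [hsplit2, hpos, hpow, hWj, hWk]
    -- apply key to a sorted permutation of a, b, c
    have haL : a < L := by omega
    have hbL : b < L := by omega
    have hcL : c < L := by omega
    rcases lt_trichotomy a b with h1 | h1 | h1
    · rcases lt_trichotomy b c with h2 | h2 | h2
      · exact key a b c h1 h2 hcL (ha.2.trans hb.2.symm) (ha.2.trans hc.2.symm)
      · exact hbc h2
      · rcases lt_trichotomy a c with h3 | h3 | h3
        · exact key a c b h3 h2 hbL (ha.2.trans hc.2.symm) (ha.2.trans hb.2.symm)
        · exact hac h3
        · exact key c a b h3 h1 hbL (hc.2.trans ha.2.symm) (hc.2.trans hb.2.symm)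
    · exact hab h1
    · rcases lt_trichotomy a c with h2 | h2 | h2
      · exact key b a c h1 h2 hcL (hb.2.trans ha.2.symm) (hb.2.trans hc.2.symm)
      · exact hac h2
      · rcases lt_trichotomy b c with h3 | h3 | h3
        · exact key b c a h3 h2 haL (hb.2.trans hc.2.symm) (hb.2.trans ha.2.symm)
        · exact hbc h3
        · exact key c b a h3 h1 haL (hc.2.trans hb.2.symm) (hc.2.trans ha.2.symm)
  calc n < B ^ L := Nat.lt_base_pow_length_digits (by omega)
    _ ≤ B ^ (2 * p) := Nat.pow_le_pow_right (by omega) hlen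
end

section
/- Every natural number n > 10^d, where d is coprime to 10, has a decimal subword (a number formed by consecutive decimal digits of n) divisible by d. In particular, every integer n > 10^10000000007 contains a decimal subword divisible by 10000000007. -/
open Finset

namespace Nat

variable {b : ℕ}

theorem mod_pow_eq_sum_digits (hb : 2 ≤ b) (n m : ℕ) :
    n % b ^ m = ∑ k ∈ range m, (b.digits n).getD k 0 * b ^ k := by
  induction m with
  | zero => simp [Nat.mod_one]
  | succ m ih => rw [mod_pow_succ, sum_range_succ, ih, getD_digits n m hb, mul_comm (b ^ m)]

theorem mod_pow_add_mul_subword (hb : 2 ≤ b) (n : ℕ) {i j : ℕ} (hij : i ≤ j + 1) :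
    n % b ^ i + b ^ i * subword b n i j = n % b ^ (j + 1) := by
  have hshift : b ^ i * subword b n i j = ∑ k ∈ Ico i (j + 1), (b.digits n).getD k 0 * b ^ k := by
    rw [subword, mul_sum, ← Ico_add_one_right_eq_Icc]
    refine sum_congr rfl fun k hk => ?_
    rw [mul_left_comm, ← pow_add, Nat.add_sub_cancel' (mem_Ico.mp hk).1]
  rw [hshift, mod_pow_eq_sum_digits hb, mod_pow_eq_sum_digits hb, sum_range_add_sum_Ico _ hij]

theorem exists_subword_dvd (hb : 2 ≤ b) {d n : ℕ} (hd : 0 < d) (hcop : d.Coprime b)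
    (hlen : d ≤ (b.digits n).length) :
    ∃ i j, i ≤ j ∧ j < (b.digits n).length ∧ d ∣ subword b n i j := by
  have hprefix : ∀ {i j}, i < j → j ≤ d → n % b ^ i ≡ n % b ^ j [MOD d] →
      ∃ i j, i ≤ j ∧ j < (b.digits n).length ∧ d ∣ subword b n i j := by
    intro i j hij hjd heq
    obtain ⟨j, rfl⟩ := Nat.exists_eq_add_of_lt hij
    have hsplit := mod_pow_add_mul_subword hb n (i := i) (j := i + j) (by omega)
    rw [← hsplit, modEq_iff_dvd' (le_add_right _ _), Nat.add_sub_cancel_left] at heq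
    exact ⟨i, i + j, by omega, by omega, (hcop.pow_right i).dvd_of_dvd_mul_left heq⟩
  obtain ⟨i, hi, j, hj, hne, heq⟩ := exists_ne_map_eq_of_card_lt_of_maps_to
    (s := range (d + 1)) (t := range d) (by simp) (f := fun i => n % b ^ i % d)
    fun i _ => mem_range.mpr (mod_lt _ hd)
  rw [mem_range] at hi hj
  rcases hne.lt_or_gt with hlt | hlt
  · exact hprefix hlt (by omega) heq
  · exact hprefix hlt (by omega) heq.symm

end Nat

theorem decimal_subword_divisible :
    (∀ d n : ℕ, 0 < d → Nat.Coprime d 10 → 10 ^ d < n →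
      ∃ i j : ℕ, i ≤ j ∧ j < (Nat.digits 10 n).length ∧ d ∣ subword 10 n i j) ∧
    (∀ n : ℕ, 10 ^ 10000000007 < n →
      ∃ i j : ℕ, i ≤ j ∧ j < (Nat.digits 10 n).length ∧
        10000000007 ∣ subword 10 n i j) := by
  have general : ∀ d n : ℕ, 0 < d → Nat.Coprime d 10 → 10 ^ d < n →
      ∃ i j : ℕ, i ≤ j ∧ j < (Nat.digits 10 n).length ∧ d ∣ subword 10 n i j :=
    fun d n hd hcop hn => Nat.exists_subword_dvd (by norm_num) hd hcop
      ((Nat.lt_digits_length_iff (by norm_num) n).mpr hn.le).le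
  exact ⟨general, fun n hn => general 10000000007 n (by norm_num) (by norm_num) hn⟩
end

section
/- If every base-B subword of n is prime and n has at least 2p+1 base-B digits where p is a prime not dividing B, then n has a subword of length at least 2 equal to p. -/
open Finset

theorem Finset.exists_add_two_le_of_two_lt_card {s : Finset ℕ} (hs : 2 < #s) :
    ∃ a ∈ s, ∃ c ∈ s, a + 2 ≤ c := by
  have hne : s.Nonempty := card_pos.mp (by omega)
  have hsub : s ⊆ Icc (s.min' hne) (s.max' hne) := fun t ht =>
    mem_Icc.mpr ⟨s.min'_le t ht, s.le_max' t ht⟩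
  have hcard : #s ≤ s.max' hne + 1 - s.min' hne := by
    simpa [Nat.card_Icc] using card_le_card hsub
  exact ⟨_, s.min'_mem hne, _, s.max'_mem hne, by omega⟩

theorem exists_add_two_le_apply_eq {α : Type*} [Fintype α] [DecidableEq α] (f : ℕ → α) {N : ℕ}
    (hN : 2 * Fintype.card α < N) : ∃ a c, a + 2 ≤ c ∧ c < N ∧ f a = f c := by
  obtain ⟨y, -, hy⟩ := exists_lt_card_fiber_of_mul_lt_card_of_maps_to
    (s := range N) (t := univ) (f := f) (n := 2) (fun _ _ => mem_univ _)
    (by simpa [mul_comm] using hN)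
  obtain ⟨a, ha, c, hc, hac⟩ := exists_add_two_le_of_two_lt_card hy
  simp only [mem_filter, mem_range] at ha hc
  exact ⟨a, c, hac, hc.1, ha.2.trans hc.2.symm⟩

def digitPrefix (B n t : ℕ) : ℕ :=
  ∑ k ∈ range t, (Nat.digits B n).getD k 0 * B ^ k

theorem digitPrefix_add_pow_mul_subword (B n : ℕ) {i j : ℕ} (hij : i ≤ j) :
    digitPrefix B n i + B ^ i * subword B n i j = digitPrefix B n (j + 1) := by
  have hsubword :
      B ^ i * subword B n i j = ∑ k ∈ Ico i (j + 1), (Nat.digits B n).getD k 0 * B ^ k := by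
    rw [subword, mul_sum, Ico_add_one_right_eq_Icc]
    refine sum_congr rfl fun k hk => ?_
    rw [mul_left_comm, ← pow_add, Nat.add_sub_cancel' (mem_Icc.mp hk).1]
  rw [hsubword, digitPrefix, digitPrefix, sum_range_add_sum_Ico _ (by omega)]

theorem dvd_subword_of_digitPrefix_modEq {B n p i j : ℕ} (hpB : p.Coprime B) (hij : i ≤ j)
    (h : digitPrefix B n i ≡ digitPrefix B n (j + 1) [MOD p]) : p ∣ subword B n i j := by
  rw [← digitPrefix_add_pow_mul_subword B n hij, ← add_zero (digitPrefix B n i)] at h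
  have hdvd : p ∣ B ^ i * subword B n i j :=
    Nat.modEq_zero_iff_dvd.mp (Nat.ModEq.add_left_cancel' _ h).symm
  exact (hpB.pow_right i).dvd_of_dvd_mul_left hdvd

theorem subword_eq_p_general (B p n : ℕ) (hp : p.Prime) (hpB : ¬ p ∣ B)
    (hlen : 2 * p + 1 ≤ (Nat.digits B n).length)
    (hprime : ∀ i j : ℕ, i ≤ j → j < (Nat.digits B n).length →
      (subword B n i j).Prime) :
    ∃ i j : ℕ, i < j ∧ j < (Nat.digits B n).length ∧ subword B n i j = p := by
  have : NeZero p := ⟨hp.ne_zero⟩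
  obtain ⟨a, c, hac, hcN, hmod⟩ := exists_add_two_le_apply_eq
    (fun t => (digitPrefix B n t : ZMod p)) (N := 2 * p + 2) (by simp)
  obtain ⟨j, rfl⟩ : ∃ j, c = j + 1 := ⟨c - 1, by omega⟩
  have hdvd : p ∣ subword B n a j := dvd_subword_of_digitPrefix_modEq
    (hp.coprime_iff_not_dvd.mpr hpB) (by omega) ((ZMod.natCast_eq_natCast_iff _ _ _).mp hmod)
  have hW : (subword B n a j).Prime := hprime a j (by omega) (by omega)
  exact ⟨a, j, by omega, by omega, ((Nat.prime_dvd_prime_iff_eq hp hW).mp hdvd).symm⟩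

theorem subword_eq_p (B p n : ℕ) (hB : 2 ≤ B) (hp : p.Prime) (hpB : ¬ p ∣ B)
    (hlen : 2 * p + 1 ≤ (Nat.digits B n).length)
    (hprime : ∀ i j : ℕ, i ≤ j → j < (Nat.digits B n).length →
      (subword B n i j).Prime) :
    ∃ i j : ℕ, i < j ∧ j < (Nat.digits B n).length ∧ subword B n i j = p :=
  subword_eq_p_general B p n hp hpB hlen hprime
end

section
/- The only positive integers whose decimal subwords are all prime are 2, 3, 5, 7, 23, 37, 53, 73, and 373. -/
lemma ofDigits_eq_sum (B : ℕ) (l : List ℕ) :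
    (Nat.ofDigits B l : ℕ) = ∑ k ∈ Finset.range l.length, l.getD k 0 * B ^ k := by
  induction l with
  | nil => simp
  | cons d t ih =>
    rw [Nat.ofDigits_cons, List.length_cons, Finset.sum_range_succ']
    simp only [List.getD_cons_succ, List.getD_cons_zero, pow_succ, pow_zero, mul_one]
    rw [ih, Finset.mul_sum]
    rw [add_comm]
    congr 1
    exact Finset.sum_congr rfl fun x _ => by ring

lemma subword_single (B n i : ℕ) : subword B n i i = (Nat.digits B n).getD i 0 := by
  simp [subword]

lemma subword_pair (B n i : ℕ) :
    subword B n i (i+1) = (Nat.digits B n).getD i 0 + B * (Nat.digits B n).getD (i+1) 0 := by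
  rw [subword, Finset.sum_Icc_succ_top (Nat.le_succ i)]
  simp [Finset.Icc_self, Nat.add_sub_cancel_left, mul_comm]

lemma subword_triple (B n i : ℕ) :
    subword B n i (i+2) = (Nat.digits B n).getD i 0 + B * (Nat.digits B n).getD (i+1) 0
      + B^2 * (Nat.digits B n).getD (i+2) 0 := by
  rw [subword, show i + 2 = (i+1)+1 from rfl,
    Finset.sum_Icc_succ_top (by omega : i ≤ i + 1 + 1)]
  rw [← subword, subword_pair]
  simp [Nat.add_sub_cancel_left, mul_comm, show i + 1 + 1 - i = 2 by omega]

lemma subword_full (n : ℕ) (hn : n ≠ 0) :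
    subword 10 n 0 ((Nat.digits 10 n).length - 1) = n := by
  have hL : 1 ≤ (Nat.digits 10 n).length :=
    List.length_pos_iff.mpr (Nat.digits_ne_nil_iff_ne_zero.mpr hn)
  have : Finset.Icc 0 ((Nat.digits 10 n).length - 1) =
      Finset.range (Nat.digits 10 n).length := by
    ext k; simp only [Finset.mem_Icc, Finset.mem_range, Nat.zero_le, true_and]; omega
  rw [subword, this]
  simp only [Nat.sub_zero]
  rw [← ofDigits_eq_sum, Nat.ofDigits_digits]

lemma single_cases : ∀ a ∈ Finset.range 10, Nat.Prime a → a = 2 ∨ a = 3 ∨ a = 5 ∨ a = 7 := by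
  decide

lemma pair_cases : ∀ a ∈ Finset.range 10, ∀ b ∈ Finset.range 10,
    Nat.Prime a → Nat.Prime b → Nat.Prime (a + 10 * b) →
    (a = 3 ∧ b = 2) ∨ (a = 7 ∧ b = 3) ∨ (a = 3 ∧ b = 5) ∨ (a = 3 ∧ b = 7) := by
  decide

set_option maxRecDepth 20000 in
lemma triple_cases : ∀ a ∈ Finset.range 10, ∀ b ∈ Finset.range 10, ∀ c ∈ Finset.range 10,
    Nat.Prime a → Nat.Prime b → Nat.Prime c →
    Nat.Prime (a + 10 * b) → Nat.Prime (b + 10 * c) →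
    Nat.Prime (a + 10 * b + 10 ^ 2 * c) →
    a = 3 ∧ b = 7 ∧ c = 3 := by
  decide

lemma digit_lt (n k : ℕ) (hk : k < (Nat.digits 10 n).length) :
    (Nat.digits 10 n).getD k 0 < 10 := by
  rw [List.getD_eq_getElem _ _ hk]
  exact Nat.digits_lt_base (by norm_num) (List.getElem_mem _)

theorem decimal_substrimes (n : ℕ) (hn : 0 < n) :
    (∀ i j : ℕ, i ≤ j → j < (Nat.digits 10 n).length →
      (subword 10 n i j).Prime) ↔
    n ∈ ({2, 3, 5, 7, 23, 37, 53, 73, 373} : Set ℕ) := by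
  constructor
  · intro h
    have hn0 : n ≠ 0 := hn.ne'
    have hL : 1 ≤ (Nat.digits 10 n).length :=
      List.length_pos_iff.mpr (Nat.digits_ne_nil_iff_ne_zero.mpr hn0)
    set L := (Nat.digits 10 n).length with hLdef
    have hb : ∀ k, k < L → (Nat.digits 10 n).getD k 0 ∈ Finset.range 10 :=
      fun k hk => Finset.mem_range.mpr (digit_lt n k hk)
    have hp : ∀ k, k < L → Nat.Prime ((Nat.digits 10 n).getD k 0) := by
      intro k hk
      have := h k k le_rfl hk
      rwa [subword_single] at this
    have hq : ∀ k, k + 1 < L →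
        Nat.Prime ((Nat.digits 10 n).getD k 0 + 10 * (Nat.digits 10 n).getD (k+1) 0) := by
      intro k hk
      have := h k (k+1) (Nat.le_succ k) hk
      rwa [subword_pair] at this
    have hr : ∀ k, k + 2 < L →
        Nat.Prime ((Nat.digits 10 n).getD k 0 + 10 * (Nat.digits 10 n).getD (k+1) 0
          + 10 ^ 2 * (Nat.digits 10 n).getD (k+2) 0) := by
      intro k hk
      have := h k (k+2) (by omega) hk
      rwa [subword_triple] at this
    have hL3 : L ≤ 3 := by
      by_contra hc
      push_neg at hc
      have T1 := triple_cases _ (hb 0 (by omega)) _ (hb 1 (by omega)) _ (hb 2 (by omega))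
        (hp 0 (by omega)) (hp 1 (by omega)) (hp 2 (by omega))
        (hq 0 (by omega)) (hq 1 (by omega)) (hr 0 (by omega))
      have T2 := triple_cases _ (hb 1 (by omega)) _ (hb 2 (by omega)) _ (hb 3 (by omega))
        (hp 1 (by omega)) (hp 2 (by omega)) (hp 3 (by omega))
        (hq 1 (by omega)) (hq 2 (by omega)) (hr 1 (by omega))
      omega
    have hfull := subword_full n hn0
    have hn' : Nat.ofDigits 10 (Nat.digits 10 n) = n := Nat.ofDigits_digits 10 n
    simp only [Set.mem_insert_iff, Set.mem_singleton_iff]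
    have hcase : L = 1 ∨ L = 2 ∨ L = 3 := by omega
    rcases hcase with h1 | h2 | h3
    · obtain ⟨a, hd⟩ := List.length_eq_one_iff.mp h1
      have hna : a = n := by
        rw [← hn', hd]; simp [Nat.ofDigits]
      have P := hp 0 (by omega)
      have B := hb 0 (by omega)
      rw [hd] at P B
      simp only [List.getD_cons_zero] at P B
      have := single_cases a B P
      omega
    · obtain ⟨a, b, hd⟩ := List.length_eq_two.mp h2
      have hna : a + 10 * b = n := by
        rw [← hn', hd]; simp [Nat.ofDigits_cons, Nat.ofDigits_nil]
      have P0 := hp 0 (by omega); have P1 := hp 1 (by omega)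
      have B0 := hb 0 (by omega); have B1 := hb 1 (by omega)
      have Q := hq 0 (by omega)
      rw [hd] at P0 P1 B0 B1 Q
      simp only [List.getD_cons_zero, List.getD_cons_succ] at P0 P1 B0 B1 Q
      have := pair_cases a B0 b B1 P0 P1 Q
      omega
    · obtain ⟨a, b, c, hd⟩ := List.length_eq_three.mp h3
      have hna : a + 10 * b + 100 * c = n := by
        rw [← hn', hd]; simp [Nat.ofDigits_cons, Nat.ofDigits_nil]; ring
      have P0 := hp 0 (by omega); have P1 := hp 1 (by omega); have P2 := hp 2 (by omega)
      have B0 := hb 0 (by omega); have B1 := hb 1 (by omega); have B2 := hb 2 (by omega)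
      have Q0 := hq 0 (by omega); have Q1 := hq 1 (by omega)
      have R := hr 0 (by omega)
      rw [hd] at P0 P1 P2 B0 B1 B2 Q0 Q1 R
      simp only [List.getD_cons_zero, List.getD_cons_succ] at P0 P1 P2 B0 B1 B2 Q0 Q1 R
      have := triple_cases a B0 b B1 c B2 P0 P1 P2 Q0 Q1 R
      omega
  · intro hm
    simp only [Set.mem_insert_iff, Set.mem_singleton_iff] at hm
    rcases hm with rfl | rfl | rfl | rfl | rfl | rfl | rfl | rfl | rfl <;>
      intro i j hij hj
    · have hd : Nat.digits 10 2 = [2] := by norm_num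
      rw [hd] at hj; simp only [List.length_singleton] at hj
      interval_cases j; interval_cases i
      simp only [subword, hd]; decide
    · have hd : Nat.digits 10 3 = [3] := by norm_num
      rw [hd] at hj; simp only [List.length_singleton] at hj
      interval_cases j; interval_cases i
      simp only [subword, hd]; decide
    · have hd : Nat.digits 10 5 = [5] := by norm_num
      rw [hd] at hj; simp only [List.length_singleton] at hj
      interval_cases j; interval_cases i
      simp only [subword, hd]; decide
    · have hd : Nat.digits 10 7 = [7] := by norm_num
      rw [hd] at hj; simp only [List.length_singleton] at hj
      interval_cases j; interval_cases i
      simp only [subword, hd]; decide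
    · have hd : Nat.digits 10 23 = [3, 2] := by norm_num
      rw [hd] at hj; simp only [List.length_cons, List.length_nil] at hj
      interval_cases j <;> interval_cases i <;> simp only [subword, hd] <;> decide
    · have hd : Nat.digits 10 37 = [7, 3] := by norm_num
      rw [hd] at hj; simp only [List.length_cons, List.length_nil] at hj
      interval_cases j <;> interval_cases i <;> simp only [subword, hd] <;> decide
    · have hd : Nat.digits 10 53 = [3, 5] := by norm_num
      rw [hd] at hj; simp only [List.length_cons, List.length_nil] at hj
      interval_cases j <;> interval_cases i <;> simp only [subword, hd] <;> decide
    · have hd : Nat.digits 10 73 = [3, 7] := by norm_num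
      rw [hd] at hj; simp only [List.length_cons, List.length_nil] at hj
      interval_cases j <;> interval_cases i <;> simp only [subword, hd] <;> decide
    · have hd : Nat.digits 10 373 = [3, 7, 3] := by norm_num
      rw [hd] at hj; simp only [List.length_cons, List.length_nil] at hj
      interval_cases j <;> interval_cases i <;> simp only [subword, hd] <;> set_option maxRecDepth 20000 in decide
end
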